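/- arXiv:2203.04551 — 2 statements merged into one kernel-verified Lean document; each statement's English description precedes it below -/
import Mathlib

section
/- Let X be a discrete random variable and (Z_a)_{a∈E} a finite family of discrete random variables that are conditionally independent given X. Then the set function q(A) := I(X; Z_A) is submodular: for all A ⊆ B ⊆ E and a ∈ E \ B, I(X; Z_{B∪{a}}) - I(X; Z_B) ≤ I(X; Z_{A∪{a}}) - I(X; Z_A). -/
/-!
Write `I(X; Z_A) = H(Z_A) - H(Z_A | X)`. Conditional independence makes `A ↦ H(Z_A | X)`
modular, `H(Z_A | X) = ∑_{e ∈ A} H(Z_e | X)`, so the increment of `A ↦ I(X; Z_A)` at `a ∉ A`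
is `H(Z_a | Z_A) - H(Z_a | X)`. Submodularity is therefore the statement that conditioning
on more variables cannot increase entropy, `H(Z_a | Z_B) ≤ H(Z_a | Z_A)` for `A ⊆ B`,
i.e. strong subadditivity of entropy, which follows from Gibbs' inequality `log y ≤ y - 1`.
-/

open Finset Real

noncomputable section

/-- Pushforward pmf: the probability that the random variable `W` takes value `b`,
under the pmf `μ` on the finite sample space `Ω`. -/
def pf {Ω β : Type*} [Fintype Ω] [Fintype β] [DecidableEq β]
    (μ : Ω → ℝ) (W : Ω → β) (b : β) : ℝ :=
  ∑ ω, if W ω = b then μ ω else 0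

/-- Shannon entropy of the random variable `W` under the pmf `μ`
(natural log, convention `0 * log 0 = 0` since `Real.log 0 = 0`). -/
def ent {Ω β : Type*} [Fintype Ω] [Fintype β] [DecidableEq β]
    (μ : Ω → ℝ) (W : Ω → β) : ℝ :=
  -∑ b, pf μ W b * Real.log (pf μ W b)

/-- Mutual information `I(W;V) = H(W) - H(W|V) = H(W) + H(V) - H(W,V)`. -/
def mi {Ω β γ : Type*} [Fintype Ω] [Fintype β] [DecidableEq β]
    [Fintype γ] [DecidableEq γ] (μ : Ω → ℝ) (W : Ω → β) (V : Ω → γ) : ℝ :=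
  ent μ W + ent μ V - ent μ (fun ω => (W ω, V ω))

end

section Pushforward

variable {Ω α β γ : Type*} [Fintype Ω] [Fintype α] [DecidableEq α] [Fintype β] [DecidableEq β]
  [Fintype γ] [DecidableEq γ] (μ : Ω → ℝ)

lemma pf_nonneg (hμ : ∀ ω, 0 ≤ μ ω) (W : Ω → β) (b : β) : 0 ≤ pf μ W b :=
  sum_nonneg fun ω _ => by split_ifs <;> simp [hμ ω]

lemma le_pf_apply (hμ : ∀ ω, 0 ≤ μ ω) (W : Ω → β) (ω : Ω) : μ ω ≤ pf μ W (W ω) := by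
  have h := single_le_sum (f := fun ω' => if W ω' = W ω then μ ω' else 0)
    (fun ω' _ => by split_ifs <;> simp [hμ ω']) (mem_univ ω)
  simpa [pf] using h

lemma sum_pf_mul (W : Ω → β) (F : β → ℝ) : ∑ b, pf μ W b * F b = ∑ ω, μ ω * F (W ω) := by
  simp only [pf, sum_mul, ite_mul, zero_mul]
  rw [sum_comm]
  simp

lemma sum_pf (W : Ω → β) : ∑ b, pf μ W b = ∑ ω, μ ω := by
  simpa using sum_pf_mul μ W 1

lemma sum_pf_prod_mk (V : Ω → γ) (W : Ω → β) (c : γ) :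
    ∑ b, pf μ (fun ω => (V ω, W ω)) (c, b) = pf μ V c := by
  simp only [pf, Prod.mk.injEq, ite_and]
  rw [sum_comm]
  simp

lemma pf_prod_mk_comp (V : Ω → α) (W : Ω → β) (f : β → γ) (x : α) (y : γ) :
    pf μ (fun ω => (V ω, f (W ω))) (x, y) =
      ∑ b, if f b = y then pf μ (fun ω => (V ω, W ω)) (x, b) else 0 := by
  simp only [pf, Prod.mk.injEq, ite_and, ite_sum_zero]
  rw [sum_comm]
  refine sum_congr rfl fun ω _ => ?_
  by_cases hV : V ω = x
  · rw [Fintype.sum_eq_single (W ω) fun b hb => by simp [Ne.symm hb]]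
    simp [hV]
  · simp [hV]

lemma pf_comp_apply_of_injective (W : Ω → β) {f : β → γ} (hf : f.Injective) (b : β) :
    pf μ (fun ω => f (W ω)) (f b) = pf μ W b := by
  simp [pf, hf.eq_iff]

lemma ent_eq_neg_sum (W : Ω → β) : ent μ W = -∑ ω, μ ω * log (pf μ W (W ω)) := by
  rw [ent, sum_pf_mul μ W fun b => log (pf μ W b)]

lemma ent_comp_of_injective (W : Ω → β) {f : β → γ} (hf : f.Injective) :
    ent μ (fun ω => f (W ω)) = ent μ W := by
  simp only [ent_eq_neg_sum, pf_comp_apply_of_injective μ W hf]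

end Pushforward

lemma mul_log_le_mul_div_sub {m p q r s : ℝ} (hm : 0 ≤ m) (hp : m ≤ p) (hq : m ≤ q) (hr : m ≤ r)
    (hs : m ≤ s) : m * (log q + log r - log p - log s) ≤ m * (q * r / s / p) - m := by
  rcases hm.eq_or_lt with rfl | hm
  · simp
  have hp := hm.trans_le hp
  have hq := hm.trans_le hq
  have hr := hm.trans_le hr
  have hs := hm.trans_le hs
  have hlog := log_le_sub_one_of_pos (x := q * r / s / p) (by positivity)
  rw [log_div (by positivity) hp.ne', log_div (by positivity) hs.ne', log_mul hq.ne' hr.ne'] at hlog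
  linarith [mul_le_mul_of_nonneg_left hlog hm.le]

lemma sum_mul_div_eq_sum {α β γ : Type*} [Fintype α] [Fintype β] [Fintype γ]
    {q : γ → β → ℝ} {r : γ → α → ℝ} {s : γ → ℝ}
    (hq : ∀ c, ∑ b, q c b = s c) (hr : ∀ c, ∑ a, r c a = s c) :
    ∑ t : (γ × β) × α, q t.1.1 t.1.2 * r t.1.1 t.2 / s t.1.1 = ∑ c, s c := by
  simp only [Fintype.sum_prod_type]
  refine sum_congr rfl fun c _ => ?_
  simp_rw [← sum_div, ← sum_mul_sum, hq, hr, mul_self_div_self]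

section StrongSubadditivity

variable {Ω α β γ : Type*} [Fintype Ω] [Fintype α] [DecidableEq α] [Fintype β] [DecidableEq β]
  [Fintype γ] [DecidableEq γ] (μ : Ω → ℝ)

theorem ent_add_ent_le (hμ : ∀ ω, 0 ≤ μ ω) (U : Ω → α) (W : Ω → β) (V : Ω → γ) :
    ent μ (fun ω => ((V ω, W ω), U ω)) + ent μ V ≤
      ent μ (fun ω => (V ω, W ω)) + ent μ (fun ω => (V ω, U ω)) := by
  let T ω := ((V ω, W ω), U ω)
  let G (t : (γ × β) × α) :=
    pf μ (fun ω => (V ω, W ω)) t.1 * pf μ (fun ω => (V ω, U ω)) (t.1.1, t.2) / pf μ V t.1.1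
  have hG : ∑ ω, μ ω * (G (T ω) / pf μ T (T ω)) ≤ ∑ ω, μ ω :=
    calc ∑ ω, μ ω * (G (T ω) / pf μ T (T ω))
        = ∑ t, pf μ T t * (G t / pf μ T t) := (sum_pf_mul μ T fun t => G t / pf μ T t).symm
      _ ≤ ∑ t, G t := by
        refine sum_le_sum fun t _ => ?_
        rcases eq_or_ne (pf μ T t) 0 with h | h
        · rw [h, zero_mul]
          exact div_nonneg (mul_nonneg (pf_nonneg μ hμ _ _) (pf_nonneg μ hμ _ _))
            (pf_nonneg μ hμ _ _)
        · rw [mul_div_cancel₀ _ h]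
      _ = ∑ c, pf μ V c := sum_mul_div_eq_sum (sum_pf_prod_mk μ V W) (sum_pf_prod_mk μ V U)
      _ = ∑ ω, μ ω := sum_pf μ V
  have hsum := sum_le_sum fun ω (_ : ω ∈ univ) => mul_log_le_mul_div_sub (hμ ω)
    (le_pf_apply μ hμ T ω) (le_pf_apply μ hμ (fun ω => (V ω, W ω)) ω)
    (le_pf_apply μ hμ (fun ω => (V ω, U ω)) ω) (le_pf_apply μ hμ V ω)
  simp only [mul_add, mul_sub, sum_add_distrib, sum_sub_distrib] at hsum
  simp only [ent_eq_neg_sum]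
  linarith

end StrongSubadditivity

section ConditionalEntropy

variable {Ω β γ : Type*} [Fintype Ω] [Fintype β] [DecidableEq β] [Fintype γ] [DecidableEq γ]
  (μ : Ω → ℝ)

noncomputable def condEnt (U : Ω → β) (V : Ω → γ) : ℝ :=
  ent μ (fun ω => (V ω, U ω)) - ent μ V

lemma mi_eq_ent_sub_condEnt (X : Ω → β) (V : Ω → γ) : mi μ X V = ent μ V - condEnt μ V X := by
  unfold mi condEnt
  ring

theorem condEnt_le_condEnt_comp {α : Type*} [Fintype α] [DecidableEq α] (hμ : ∀ ω, 0 ≤ μ ω)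
    (U : Ω → α) (W : Ω → β) (f : β → γ) :
    condEnt μ U W ≤ condEnt μ U (fun ω => f (W ω)) := by
  have hssa := ent_add_ent_le μ hμ U W (fun ω => f (W ω))
  have hWU : ent μ (fun ω => ((f (W ω), W ω), U ω)) = ent μ (fun ω => (W ω, U ω)) :=
    ent_comp_of_injective μ (fun ω => (W ω, U ω)) (f := fun y => ((f y.1, y.1), y.2))
      fun _ _ h => Prod.ext (congrArg (·.1.2) h) (congrArg (·.2) h)
  have hW : ent μ (fun ω => (f (W ω), W ω)) = ent μ W :=
    ent_comp_of_injective μ W (f := fun b => (f b, b)) fun _ _ h => congrArg Prod.snd h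
  unfold condEnt
  linarith

end ConditionalEntropy

section CondIndep

variable {Ω E 𝒳 𝒵 : Type*} [Fintype Ω] [Fintype E] [DecidableEq E]
  [Fintype 𝒳] [DecidableEq 𝒳] [Fintype 𝒵] [DecidableEq 𝒵] (μ : Ω → ℝ)

lemma sum_ite_restrict_eq_prod (S : Finset E) (g : E → 𝒵 → ℝ) (w : {e // e ∈ S} → 𝒵) :
    ∑ z : E → 𝒵, (if (fun e : {e // e ∈ S} => z e) = w then ∏ e, g e (z e) else 0) =
      (∏ e : {e // e ∈ S}, g e (w e)) * ∏ e : {e // e ∉ S}, ∑ v, g e v := by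
  let σ := (Equiv.piEquivPiSubtypeProd (· ∈ S) fun _ => 𝒵).symm
  have hres : ∀ u v, (fun e : {e // e ∈ S} => σ (u, v) e) = u := fun u v => by
    funext e
    simp [σ, Equiv.piEquivPiSubtypeProd_symm_apply, e.2]
  have hprod : ∀ u v, ∏ e, g e (σ (u, v) e) =
      (∏ e : {e // e ∈ S}, g e (u e)) * ∏ e : {e // e ∉ S}, g e (v e) := fun u v => by
    rw [← prod_mul_prod_compl S, prod_subtype S (fun _ => Iff.rfl),
      prod_subtype Sᶜ (fun _ => mem_compl)]
    congr 1 <;> refine prod_congr rfl fun e _ => ?_ <;>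
      simp [σ, Equiv.piEquivPiSubtypeProd_symm_apply, e.2]
  rw [← σ.sum_comp, Fintype.sum_prod_type, Fintype.prod_sum, mul_sum]
  simp only [hres, hprod]
  rw [Fintype.sum_eq_single w fun u hu => by simp [hu]]
  simp

def CondIndepGiven (X : Ω → 𝒳) (Z : E → Ω → 𝒵) : Prop :=
  ∀ (x : 𝒳) (z : E → 𝒵), pf μ X x ≠ 0 →
    pf μ (fun ω => (X ω, fun e : E => Z e ω)) (x, z) / pf μ X x =
      ∏ e : E, pf μ (fun ω => (X ω, Z e ω)) (x, z e) / pf μ X x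

variable {μ} {X : Ω → 𝒳} {Z : E → Ω → 𝒵}

lemma pf_restrict_eq_mul_prod (hCI : CondIndepGiven μ X Z) (S : Finset E)
    {x : 𝒳} (hx : pf μ X x ≠ 0) (w : {e // e ∈ S} → 𝒵) :
    pf μ (fun ω => (X ω, fun e : {e // e ∈ S} => Z e ω)) (x, w) =
      pf μ X x * ∏ e : {e // e ∈ S}, pf μ (fun ω => (X ω, Z e ω)) (x, w e) / pf μ X x := by
  have hjoint : ∀ z, pf μ (fun ω => (X ω, fun e => Z e ω)) (x, z) =
      pf μ X x * ∏ e, pf μ (fun ω => (X ω, Z e ω)) (x, z e) / pf μ X x := fun z => by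
    rw [← hCI x z hx, mul_div_cancel₀ _ hx]
  have hmarg : ∀ e : {e // e ∉ S}, ∑ v, pf μ (fun ω => (X ω, Z e ω)) (x, v) / pf μ X x = 1 :=
    fun e => by rw [← sum_div, sum_pf_prod_mk, div_self hx]
  refine (pf_prod_mk_comp μ X (fun ω e => Z e ω) (fun z (e : {e // e ∈ S}) => z e) x w).trans ?_
  simp only [hjoint, ← mul_ite_zero, ← mul_sum]
  rw [sum_ite_restrict_eq_prod S (fun e v => pf μ (fun ω => (X ω, Z e ω)) (x, v) / pf μ X x),
    prod_eq_one fun e _ => hmarg e, mul_one]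

theorem condEnt_restrict_eq_sum (hμ : ∀ ω, 0 ≤ μ ω) (hCI : CondIndepGiven μ X Z) (S : Finset E) :
    condEnt μ (fun ω (e : {e // e ∈ S}) => Z e ω) X = ∑ e ∈ S, condEnt μ (Z e) X := by
  have hpt : ∀ ω, μ ω * log (pf μ X (X ω)) -
      μ ω * log (pf μ (fun ω => (X ω, fun e : {e // e ∈ S} => Z e ω))
        (X ω, fun e : {e // e ∈ S} => Z e ω)) =
      ∑ e ∈ S, (μ ω * log (pf μ X (X ω)) -
        μ ω * log (pf μ (fun ω => (X ω, Z e ω)) (X ω, Z e ω))) := by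
    intro ω
    rcases (hμ ω).eq_or_lt with h | h
    · simp [← h]
    have hX := (h.trans_le (le_pf_apply μ hμ X ω)).ne'
    have hXZ : ∀ e, pf μ (fun ω => (X ω, Z e ω)) (X ω, Z e ω) ≠ 0 :=
      fun e => (h.trans_le (le_pf_apply μ hμ _ ω)).ne'
    rw [pf_restrict_eq_mul_prod hCI S hX,
      prod_coe_sort S fun e => pf μ (fun ω => (X ω, Z e ω)) (X ω, Z e ω) / pf μ X (X ω),
      log_mul hX (prod_ne_zero_iff.2 fun e _ => div_ne_zero (hXZ e) hX),
      log_prod fun e _ => div_ne_zero (hXZ e) hX, mul_add, mul_sum, sub_add_eq_sub_sub, sub_self,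
      zero_sub, ← sum_neg_distrib]
    refine sum_congr rfl fun e _ => ?_
    rw [log_div (hXZ e) hX]
    ring
  unfold condEnt
  simp only [ent_eq_neg_sum, neg_sub_neg, ← sum_sub_distrib]
  rw [sum_congr rfl fun ω _ => hpt ω, sum_comm]

omit [Fintype E] in
lemma ent_restrict_insert (a : E) (S : Finset E) :
    ent μ (fun ω (e : {e // e ∈ insert a S}) => Z e ω) =
      ent μ (fun ω => (fun e : {e // e ∈ S} => Z e ω, Z a ω)) := by
  refine (ent_comp_of_injective μ _ (f := fun y : {e // e ∈ insert a S} → 𝒵 =>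
    (fun e : {e // e ∈ S} => y ⟨e, mem_insert_of_mem e.2⟩, y ⟨a, mem_insert_self a S⟩))
    fun y y' h => ?_).symm
  simp only [Prod.mk.injEq, funext_iff] at h
  funext ⟨e, he⟩
  rcases mem_insert.1 he with rfl | he
  · exact h.2
  · exact h.1 ⟨e, he⟩

theorem mi_insert_sub_mi (hμ : ∀ ω, 0 ≤ μ ω) (hCI : CondIndepGiven μ X Z) {a : E}
    {S : Finset E} (ha : a ∉ S) :
    mi μ X (fun ω (e : {e // e ∈ insert a S}) => Z e ω) -
        mi μ X (fun ω (e : {e // e ∈ S}) => Z e ω) =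
      condEnt μ (Z a) (fun ω (e : {e // e ∈ S}) => Z e ω) - condEnt μ (Z a) X := by
  rw [mi_eq_ent_sub_condEnt, mi_eq_ent_sub_condEnt, condEnt_restrict_eq_sum hμ hCI,
    condEnt_restrict_eq_sum hμ hCI, sum_insert ha, ent_restrict_insert]
  unfold condEnt
  ring

end CondIndep

theorem stmt2_general {Ω E 𝒳 𝒵 : Type*} [Fintype Ω] [Fintype E] [DecidableEq E]
    [Fintype 𝒳] [DecidableEq 𝒳] [Fintype 𝒵] [DecidableEq 𝒵]
    (μ : Ω → ℝ) (hμ0 : ∀ ω, 0 ≤ μ ω)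
    (X : Ω → 𝒳) (Z : E → Ω → 𝒵)
    (hCI : ∀ (x : 𝒳) (z : E → 𝒵), pf μ X x ≠ 0 →
      pf μ (fun ω => (X ω, fun e : E => Z e ω)) (x, z) / pf μ X x =
      ∏ e : E, pf μ (fun ω => (X ω, Z e ω)) (x, z e) / pf μ X x)
    (A B : Finset E) (hAB : A ⊆ B) (a : E) (ha : a ∉ B) :
    mi μ X (fun ω => fun e : {e // e ∈ insert a B} => Z e ω) -
      mi μ X (fun ω => fun e : {e // e ∈ B} => Z e ω) ≤
    mi μ X (fun ω => fun e : {e // e ∈ insert a A} => Z e ω) -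
      mi μ X (fun ω => fun e : {e // e ∈ A} => Z e ω) := by
  rw [mi_insert_sub_mi hμ0 hCI ha, mi_insert_sub_mi hμ0 hCI fun h => ha (hAB h)]
  have hmono := condEnt_le_condEnt_comp μ hμ0 (Z a) (fun ω (e : {e // e ∈ B}) => Z e ω)
    fun y (e : {e // e ∈ A}) => y ⟨e, hAB e.2⟩
  linarith

/-- Submodularity of mutual information under conditional independence:
if the variables `(Z_e)_{e ∈ E}` are conditionally independent given `X`
(the joint conditional pmf factorizes), then `A ↦ I(X; Z_A)` is submodular:
for `A ⊆ B` and `a ∉ B`,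
`I(X; Z_{B∪{a}}) - I(X; Z_B) ≤ I(X; Z_{A∪{a}}) - I(X; Z_A)`. -/
theorem stmt2 {Ω E 𝒳 𝒵 : Type*} [Fintype Ω] [Fintype E] [DecidableEq E]
    [Fintype 𝒳] [DecidableEq 𝒳] [Fintype 𝒵] [DecidableEq 𝒵]
    (μ : Ω → ℝ) (hμ0 : ∀ ω, 0 ≤ μ ω) (hμ1 : ∑ ω, μ ω = 1)
    (X : Ω → 𝒳) (Z : E → Ω → 𝒵)
    (hCI : ∀ (x : 𝒳) (z : E → 𝒵), pf μ X x ≠ 0 →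
      pf μ (fun ω => (X ω, fun e : E => Z e ω)) (x, z) / pf μ X x =
      ∏ e : E, pf μ (fun ω => (X ω, Z e ω)) (x, z e) / pf μ X x)
    (A B : Finset E) (hAB : A ⊆ B) (a : E) (ha : a ∉ B) :
    mi μ X (fun ω => fun e : {e // e ∈ insert a B} => Z e ω) -
      mi μ X (fun ω => fun e : {e // e ∈ B} => Z e ω) ≤
    mi μ X (fun ω => fun e : {e // e ∈ insert a A} => Z e ω) -
      mi μ X (fun ω => fun e : {e // e ∈ A} => Z e ω) :=
  stmt2_general μ hμ0 X Z hCI A B hAB a ha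
end

section
/- Maximizing a monotone submodular set function q with q(∅) = 0 over a partition matroid by the greedy algorithm (selecting elements one block at a time, each time extending the current set by the single element giving the largest value) yields a set A_g with q(A_g) ≥ (1/2)·max_{A ∈ M} q(A). -/
open Finset

/-- Greedy maximization of a normalized monotone submodular function over a partition
matroid achieves at least half of the optimum.  The ground set `E` is partitioned into
`N` blocks via `part : E → Fin N`; the matroid consists of the sets containing at most
one element per block.  The greedy algorithm picks, at step `k`, an element `g k` from a
block not yet used, whose addition to the current set maximizes `q` among all elements
of unused blocks.  Then `q(A) ≤ 2 * q(A_g)` for every `A` in the matroid. -/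
theorem stmt5 {E : Type*} [Fintype E] [DecidableEq E] (N : ℕ) (part : E → Fin N)
    (q : Finset E → ℝ)
    (hmono : ∀ S T : Finset E, S ⊆ T → q S ≤ q T)
    (hsub : ∀ S T : Finset E, ∀ a : E, S ⊆ T → a ∉ T →
      q (insert a T) - q T ≤ q (insert a S) - q S)
    (hempty : q ∅ = 0)
    (g : ℕ → E)
    (hfresh : ∀ k < N, ∀ j < k, part (g j) ≠ part (g k))
    (hgreedy : ∀ k < N, ∀ e : E, (∀ j < k, part (g j) ≠ part e) →
      q (insert e (Finset.image g (Finset.range k))) ≤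
        q (insert (g k) (Finset.image g (Finset.range k)))) :
    ∀ A : Finset E, (∀ n : Fin N, (A.filter fun e => part e = n).card ≤ 1) →
      q A ≤ 2 * q (Finset.image g (Finset.range N)) := by
  classical
  intro A hA
  set Gk : ℕ → Finset E := fun k => Finset.image g (Finset.range k) with hGk
  have hGsucc : ∀ k, Gk (k + 1) = insert (g k) (Gk k) := by
    intro k
    simp [hGk, Finset.range_add_one, Finset.image_insert]
  have hGmono : ∀ j k : ℕ, j ≤ k → Gk j ⊆ Gk k := fun j k h =>
    Finset.image_subset_image (Finset.range_subset_range.2 h)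
  have htel : q (Gk N) = ∑ k ∈ Finset.range N, (q (Gk (k + 1)) - q (Gk k)) := by
    rw [Finset.sum_range_sub (fun k => q (Gk k))]
    simp [hGk, hempty]
  set G : Finset E := Gk N with hG
  -- submodular accumulation bound
  have key : ∀ S : Finset E,
      q (S ∪ G) ≤ q G + ∑ a ∈ S \ G, (q (insert a G) - q G) := by
    intro S
    induction S using Finset.induction_on with
    | empty => simp
    | @insert a S ha ih =>
      by_cases haG : a ∈ G
      · have h1 : insert a S ∪ G = S ∪ G := by
          rw [Finset.insert_union, Finset.insert_eq_self.2 (Finset.mem_union_right _ haG)]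
        rw [h1, Finset.insert_sdiff_of_mem _ haG]
        exact ih
      · have h1 : insert a S ∪ G = insert a (S ∪ G) := Finset.insert_union a S G
        have h2 : insert a S \ G = insert a (S \ G) := by
          rw [Finset.insert_sdiff_of_notMem _ haG]
        have haSG : a ∉ S ∪ G := by
          simp [ha, haG]
        have hsub1 : q (insert a (S ∪ G)) - q (S ∪ G) ≤ q (insert a G) - q G :=
          hsub G (S ∪ G) a Finset.subset_union_right haSG
        have haSdG : a ∉ S \ G := fun h => ha (Finset.mem_sdiff.mp h).1
        rw [h1, h2, Finset.sum_insert haSdG]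
        linarith
  -- injectivity / surjectivity of part ∘ g on Fin N
  have hinj : Function.Injective (fun k : Fin N => part (g ↑k)) := by
    intro j k h
    by_contra hne
    rcases lt_or_gt_of_ne (fun e : (j : ℕ) = (k : ℕ) => hne (Fin.ext e)) with hlt | hlt
    · exact hfresh ↑k k.isLt ↑j hlt h
    · exact hfresh ↑j j.isLt ↑k hlt h.symm
  have hsurj : Function.Surjective (fun k : Fin N => part (g ↑k)) :=
    Finite.injective_iff_surjective.mp hinj
  -- choice of index for each element
  have hκ : ∀ a : E, part (g ↑(hsurj (part a)).choose) = part a := by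
    intro a
    exact (hsurj (part a)).choose_spec
  set κ : E → ℕ := fun a => ↑(hsurj (part a)).choose with hκdef
  have hκlt : ∀ a, κ a < N := fun a => (hsurj (part a)).choose.isLt
  -- individual marginal bound
  have hbound : ∀ a ∈ A \ G,
      q (insert a G) - q G ≤ q (Gk (κ a + 1)) - q (Gk (κ a)) := by
    intro a ha
    have haG : a ∉ G := (Finset.mem_sdiff.mp ha).2
    have h1 : q (insert a G) - q G ≤ q (insert a (Gk (κ a))) - q (Gk (κ a)) :=
      hsub _ _ a (hGmono _ _ (le_of_lt (hκlt a))) haG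
    have h2 : q (insert a (Gk (κ a))) ≤ q (insert (g (κ a)) (Gk (κ a))) := by
      apply hgreedy (κ a) (hκlt a) a
      intro j hj
      rw [← hκ a]
      exact hfresh (κ a) (hκlt a) j hj
    rw [hGsucc]
    linarith
  -- injectivity of κ on A \ G
  have hκinj : Set.InjOn κ ↑(A \ G) := by
    intro a ha b hb hab
    have hpa : part a = part b := by
      rw [← hκ a, ← hκ b]
      exact congrArg (fun n => part (g n)) hab
    have haA : a ∈ A := (Finset.mem_sdiff.mp (by simpa using ha)).1
    have hbA : b ∈ A := (Finset.mem_sdiff.mp (by simpa using hb)).1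
    have := Finset.card_le_one.mp (hA (part b))
    exact this a (Finset.mem_filter.mpr ⟨haA, hpa⟩) b (Finset.mem_filter.mpr ⟨hbA, rfl⟩)
  -- sum bound
  have hsum : ∑ a ∈ A \ G, (q (insert a G) - q G) ≤ q G := by
    calc ∑ a ∈ A \ G, (q (insert a G) - q G)
        ≤ ∑ a ∈ A \ G, (q (Gk (κ a + 1)) - q (Gk (κ a))) :=
          Finset.sum_le_sum hbound
      _ = ∑ k ∈ (A \ G).image κ, (q (Gk (k + 1)) - q (Gk k)) := by
          rw [Finset.sum_image (fun a ha b hb hab =>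
            hκinj (Finset.mem_coe.mpr ha) (Finset.mem_coe.mpr hb) hab)]
      _ ≤ ∑ k ∈ Finset.range N, (q (Gk (k + 1)) - q (Gk k)) := by
          apply Finset.sum_le_sum_of_subset_of_nonneg
          · intro k hk
            rcases Finset.mem_image.mp hk with ⟨a, _, rfl⟩
            exact Finset.mem_range.mpr (hκlt a)
          · intro k _ _
            have : q (Gk k) ≤ q (Gk (k + 1)) := by
              rw [hGsucc]
              exact hmono _ _ (Finset.subset_insert _ _)
            linarith
      _ = q G := (htel).symm
  have hfinal : q A ≤ q (A ∪ G) := hmono _ _ Finset.subset_union_left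
  have := key A
  have : q A ≤ 2 * q G := by linarith
  simpa [hG, hGk] using this
end
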